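/- For any dimension d ≥ 1, a self-adjoint operator G on ℂ^d satisfies Q_{ij}(G) ∈ ℝ for all i,j ∈ ℤ_d (i.e. G ∈ KD^r) if and only if its matrix entries in the Fourier basis satisfy G_{j,(j+k)} = G_{(j−k),j} for all j,k ∈ ℤ_d (indices mod d), where G_{kj} = ⟨b_k|G|b_j⟩. -/
import Mathlib


open Complex Matrix
open scoped ComplexOrder

noncomputable section

/-- `omega n = exp(2 π i / n)`, a primitive `n`-th root of unity. -/
def omega (n : ℕ) : ℂ := Complex.exp (2 * Real.pi * Complex.I / n)

/-- The standard basis vector `a i` of `ℂ^d`. -/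
def stdVec (d : ℕ) (i : Fin d) : Fin d → ℂ := fun k => if k = i then 1 else 0

/-- The Fourier (DFT) basis vector `b j = (1/√d) ∑ i, ω_d^(i j) • a i`. -/
def fourierVec (d : ℕ) (j : Fin d) : Fin d → ℂ :=
  fun i => ((1 / Real.sqrt d : ℝ) : ℂ) * omega d ^ (i.val * j.val)

/-- The rank-one projector `|v⟩⟨v|` of a vector `v`, as a matrix. -/
def proj (d : ℕ) (v : Fin d → ℂ) : Matrix (Fin d) (Fin d) ℂ :=
  Matrix.of fun i k => v i * (starRingEnd ℂ) (v k)

/-- The Kirkwood-Dirac quasiprobability `Q i j F = ⟨b j|a i⟩ * ⟨a i|F|b j⟩`. -/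
def KDQ (d : ℕ) (F : Matrix (Fin d) (Fin d) ℂ) (i j : Fin d) : ℂ :=
  (starRingEnd ℂ) (fourierVec d j i) * ∑ k, F i k * fourierVec d j k

/-- The set `KD⁺` of KD classical density matrices: positive semidefinite, trace one,
and all KD quasiprobabilities are nonnegative reals. -/
def KDplus (d : ℕ) : Set (Matrix (Fin d) (Fin d) ℂ) :=
  {ρ | ρ.PosSemidef ∧ ρ.trace = 1 ∧
    ∀ i j, (KDQ d ρ i j).im = 0 ∧ 0 ≤ (KDQ d ρ i j).re}

/-- The set `KD^r` of self-adjoint operators whose KD distribution is everywhere real. -/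
def KDr (d : ℕ) : Set (Matrix (Fin d) (Fin d) ℂ) :=
  {F | F.IsHermitian ∧ ∀ i j, (KDQ d F i j).im = 0}

/-- `A = {|a i⟩⟨a i| : i ∈ ℤ_d}`. -/
def setA (d : ℕ) : Set (Matrix (Fin d) (Fin d) ℂ) :=
  {M | ∃ i : Fin d, M = proj d (stdVec d i)}

/-- `B = {|b j⟩⟨b j| : j ∈ ℤ_d}`. -/
def setB (d : ℕ) : Set (Matrix (Fin d) (Fin d) ℂ) :=
  {M | ∃ j : Fin d, M = proj d (fourierVec d j)}

/-- For `d = p * q` : `ψ m s = (1/√q) ∑ k ∈ ℤ_q, ω_q^(s k) • a (k p + m)`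
(so the `i`-th coordinate is nonzero iff `i ≡ m [MOD p]`, with `k = i / p`). -/
def psiPQ (d p q : ℕ) (m : Fin p) (s : Fin q) : Fin d → ℂ :=
  fun i => if i.val % p = m.val then
    ((1 / Real.sqrt q : ℝ) : ℂ) * omega q ^ (s.val * (i.val / p)) else 0

/-- For `d = p * q` : `φ m' s' = (1/√p) ∑ k ∈ ℤ_p, ω_p^(s' k) • a (k q + m')`. -/
def phiPQ (d p q : ℕ) (m' : Fin q) (s' : Fin p) : Fin d → ℂ :=
  fun i => if i.val % q = m'.val then
    ((1 / Real.sqrt p : ℝ) : ℂ) * omega p ^ (s'.val * (i.val / q)) else 0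

/-- For `d = p ^ 2` : `C = {|ψ m s⟩⟨ψ m s| : m, s ∈ ℤ_p}`. -/
def setC2 (d p : ℕ) : Set (Matrix (Fin d) (Fin d) ℂ) :=
  {M | ∃ m s : Fin p, M = proj d (psiPQ d p p m s)}

/-- For `d = p * q` : `C = {|ψ m s⟩⟨ψ m s| : m ∈ ℤ_p, s ∈ ℤ_q}`. -/
def setC (d p q : ℕ) : Set (Matrix (Fin d) (Fin d) ℂ) :=
  {M | ∃ (m : Fin p) (s : Fin q), M = proj d (psiPQ d p q m s)}

/-- For `d = p * q` : `D = {|φ m' s'⟩⟨φ m' s'| : m' ∈ ℤ_q, s' ∈ ℤ_p}`. -/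
def setD (d p q : ℕ) : Set (Matrix (Fin d) (Fin d) ℂ) :=
  {M | ∃ (m' : Fin q) (s' : Fin p), M = proj d (phiPQ d p q m' s')}

/-- Matrix entries in the Fourier basis: `⟨b k|G|b j⟩`. -/
def entryB (d : ℕ) (G : Matrix (Fin d) (Fin d) ℂ) (k j : Fin d) : ℂ :=
  ∑ i, ∑ l, (starRingEnd ℂ) (fourierVec d k i) * G i l * fourierVec d j l


/-! ### Auxiliary lemmas for `stmt5` -/

lemma omega_ne_zero' (d : ℕ) : omega d ≠ 0 := Complex.exp_ne_zero _

lemma omega_prim {d : ℕ} (hd : 0 < d) : IsPrimitiveRoot (omega d) d :=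
  Complex.isPrimitiveRoot_exp d hd.ne'

lemma omega_pow_d {d : ℕ} (hd : 0 < d) : omega d ^ d = 1 := (omega_prim hd).pow_eq_one

lemma omega_pow_mod {d : ℕ} (hd : 0 < d) (n : ℕ) : omega d ^ n = omega d ^ (n % d) := by
  conv_lhs => rw [← Nat.mod_add_div n d]
  rw [pow_add, pow_mul, omega_pow_d hd, one_pow, mul_one]

lemma omega_pow_congr {d : ℕ} (hd : 0 < d) {x y : ℕ} (h : x % d = y % d) :
    omega d ^ x = omega d ^ y := by
  rw [omega_pow_mod hd x, omega_pow_mod hd y, h]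

lemma conj_omega (d : ℕ) : (starRingEnd ℂ) (omega d) = (omega d)⁻¹ := by
  rw [omega, ← Complex.exp_conj, ← Complex.exp_neg]
  congr 1
  rw [map_div₀]
  have h2 : (starRingEnd ℂ) 2 = 2 := map_ofNat _ 2
  simp [h2]
  ring

lemma omega_mul_inv_pow {d : ℕ} (hd : 0 < d) {m a b : ℕ} (h : (m + a) % d = b % d) :
    omega d ^ m * ((omega d)⁻¹) ^ b = ((omega d)⁻¹) ^ a := by
  have h1 : omega d ^ m * omega d ^ a = omega d ^ b := by
    rw [← pow_add]; exact omega_pow_congr hd h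
  have hz : omega d ^ m ≠ 0 := pow_ne_zero _ (omega_ne_zero' d)
  rw [inv_pow, inv_pow, ← h1, mul_inv, ← mul_assoc, mul_inv_cancel₀ hz, one_mul]

lemma geom_fin {d : ℕ} (hd : 0 < d) (w : ℂ) (hw : w ^ d = 1) :
    ∑ c : Fin d, w ^ c.val = if w = 1 then (d : ℂ) else 0 := by
  rw [Fin.sum_univ_eq_sum_range (fun c => w ^ c)]
  split_ifs with h
  · simp [h]
  · rw [geom_sum_eq h, hw]; simp

lemma dft_eq {d : ℕ} (hd : 0 < d) (f g : Fin d → ℂ)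
    (h : ∀ c : Fin d, ∑ i, omega d ^ (i.val * c.val) * f i
        = ∑ i, omega d ^ (i.val * c.val) * g i) (i₀ : Fin d) : f i₀ = g i₀ := by
  set ζ := omega d with hζdef
  have hz : ζ ≠ 0 := omega_ne_zero' d
  have key : ∀ F : Fin d → ℂ,
      ∑ c : Fin d, (ζ ^ (i₀.val * c.val))⁻¹ * ∑ i, ζ ^ (i.val * c.val) * F i
        = (d : ℂ) * F i₀ := by
    intro F
    have step1 : ∀ c : Fin d, (ζ ^ (i₀.val * c.val))⁻¹ * ∑ i, ζ ^ (i.val * c.val) * F i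
        = ∑ i, (ζ ^ i.val * (ζ ^ i₀.val)⁻¹) ^ c.val * F i := by
      intro c
      rw [Finset.mul_sum]
      refine Finset.sum_congr rfl fun i _ => ?_
      simp only [mul_pow, inv_pow, ← pow_mul]
      ring
    calc ∑ c : Fin d, (ζ ^ (i₀.val * c.val))⁻¹ * ∑ i, ζ ^ (i.val * c.val) * F i
        = ∑ c : Fin d, ∑ i, (ζ ^ i.val * (ζ ^ i₀.val)⁻¹) ^ c.val * F i := by
          exact Finset.sum_congr rfl fun c _ => step1 c
      _ = ∑ i, (∑ c : Fin d, (ζ ^ i.val * (ζ ^ i₀.val)⁻¹) ^ c.val) * F i := by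
          rw [Finset.sum_comm]
          exact Finset.sum_congr rfl fun i _ => (Finset.sum_mul _ _ _).symm
      _ = ∑ i : Fin d, (if i = i₀ then (d : ℂ) else 0) * F i := by
          refine Finset.sum_congr rfl fun i _ => ?_
          have hw : (ζ ^ i.val * (ζ ^ i₀.val)⁻¹) ^ d = 1 := by
            rw [mul_pow, inv_pow, ← pow_mul, ← pow_mul, mul_comm i.val d, mul_comm i₀.val d,
              pow_mul, pow_mul, omega_pow_d hd, one_pow, one_pow]
            simp
          have hiff : ζ ^ i.val * (ζ ^ i₀.val)⁻¹ = 1 ↔ i = i₀ := by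
            rw [mul_inv_eq_one₀ (pow_ne_zero _ hz)]
            exact ⟨fun hpow => Fin.ext ((omega_prim hd).pow_inj i.isLt i₀.isLt hpow),
              by rintro rfl; rfl⟩
          rw [geom_fin hd _ hw]
          simp only [hiff]
      _ = (d : ℂ) * F i₀ := by simp
  have hd' : (d : ℂ) ≠ 0 := Nat.cast_ne_zero.mpr hd.ne'
  have h2 := key f
  rw [Finset.sum_congr rfl fun c _ => by rw [h c], key g] at h2
  exact mul_left_cancel₀ hd' h2.symm

lemma S_eq {d : ℕ} (hd : 0 < d) (G : Matrix (Fin d) (Fin d) ℂ) (j c : Fin d) :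
    ∑ i, omega d ^ (i.val * c.val) * KDQ d G i j = entryB d G (j - c) j := by
  haveI : NeZero d := ⟨hd.ne'⟩
  have h1 : ((j - c).val + c.val) % d = j.val := by rw [← Fin.val_add, sub_add_cancel]
  have hv : (c.val + (j - c).val) % d = j.val % d := by
    rw [Nat.add_comm, h1, Nat.mod_eq_of_lt j.isLt]
  simp only [KDQ, entryB, fourierVec, _root_.map_mul, map_pow, conj_omega,
    Complex.conj_ofReal]
  refine Finset.sum_congr rfl fun i _ => ?_
  rw [Finset.mul_sum, Finset.mul_sum]
  refine Finset.sum_congr rfl fun k _ => ?_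
  have key : omega d ^ (i.val * c.val) * ((omega d)⁻¹) ^ (i.val * j.val)
      = ((omega d)⁻¹) ^ (i.val * (j - c).val) := by
    refine omega_mul_inv_pow hd ?_
    have h2 := Nat.ModEq.mul_left i.val (hv : (c.val + (j - c).val) ≡ j.val [MOD d])
    rw [Nat.mul_add] at h2
    exact h2
  rw [← key]
  ring

lemma T_eq {d : ℕ} (hd : 0 < d) (G : Matrix (Fin d) (Fin d) ℂ) (hG : G.IsHermitian)
    (j c : Fin d) :
    ∑ i, omega d ^ (i.val * c.val) * (starRingEnd ℂ) (KDQ d G i j)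
      = entryB d G j (j + c) := by
  haveI : NeZero d := ⟨hd.ne'⟩
  have hv : (j.val + c.val) % d = (j + c).val % d := by
    rw [Fin.val_add, Nat.mod_mod_of_dvd _ dvd_rfl]
  have hconjG : ∀ i k, (starRingEnd ℂ) (G i k) = G k i := fun i k => by rw [← hG.apply k i, Complex.star_def]
  simp only [KDQ, entryB, fourierVec, _root_.map_mul, map_pow, map_sum, conj_omega,
    Complex.conj_ofReal, Complex.conj_conj, map_inv₀, inv_inv, hconjG]
  rw [Finset.sum_comm]
  refine Finset.sum_congr rfl fun i _ => ?_
  rw [Finset.mul_sum, Finset.mul_sum]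
  refine Finset.sum_congr rfl fun k _ => ?_
  have key : omega d ^ (i.val * c.val + i.val * j.val)
      = omega d ^ (i.val * (j + c).val) := by
    refine omega_pow_congr hd ?_
    have h2 := Nat.ModEq.mul_left i.val (hv : (j.val + c.val) ≡ (j + c).val [MOD d])
    rw [Nat.mul_add] at h2
    rw [Nat.add_comm]
    exact h2
  rw [← key, pow_add]
  ring

/-- For any `d ≥ 1`, a self-adjoint `G` has everywhere-real KD distribution
iff its Fourier-basis entries satisfy `G_{j,(j+k)} = G_{(j−k),j}` for all `j, k ∈ ℤ_d`. -/
theorem stmt5 (d : ℕ) (hd : 0 < d) (G : Matrix (Fin d) (Fin d) ℂ)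
    (hG : G.IsHermitian) :
    (∀ i j, (KDQ d G i j).im = 0) ↔
      (∀ j k : Fin d, entryB d G j (j + k) = entryB d G (j - k) j) := by
  constructor
  · intro h j k
    have hQ : ∀ i, KDQ d G i j = (starRingEnd ℂ) (KDQ d G i j) := fun i =>
      (Complex.conj_eq_iff_im.mpr (h i j)).symm
    rw [← T_eq hd G hG j k, ← S_eq hd G j k]
    exact Finset.sum_congr rfl fun i _ => by rw [← hQ i]
  · intro h i j
    rw [← Complex.conj_eq_iff_im]
    have := dft_eq hd (fun i => (starRingEnd ℂ) (KDQ d G i j)) (fun i => KDQ d G i j)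
      (fun c => by rw [T_eq hd G hG j c, S_eq hd G j c, h j c]) i
    exact this
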